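/- arXiv:2405.04245 — 3 statements merged into one kernel-verified Lean document; each statement's English description precedes it below -/
import Mathlib

section
/- Let N, d, m be positive natural numbers, and let H₁, H₂ be N×d real matrices (the representations trained by tasks t₁ and t₂), and Y₂, Y_ds be N×m real matrices (the self-supervised target of task t₂ and the downstream target), with all norms being the Frobenius norm. Suppose Ŵ₁ is a d×m real matrix attaining the minimum of ‖H₁·W − Y₂‖ over all d×m matrices W; suppose Ŵ₂ attains the minimum of ‖H₂·W − Y₂‖ over all d×m matrices W, with ‖H₂·Ŵ₂ − Y₂‖ > 0; and suppose Ŵ₂* attains the minimum of ‖H₂·W − Y_ds‖ over all d×m matrices W. Define the correlation value Cor(t₁,t₂) := ‖H₁·Ŵ₁ − Y₂‖ / ‖H₂·Ŵ₂ − Y₂‖, the downstream error of t₂ as e₂ := ‖H₂·Ŵ₂* − Y_ds‖, the downstream error of t₁ as e₁ := the infimum over all d×m matrices W of ‖H₁·W − Y_ds‖, and Δ := ‖Y₂ − Y_ds‖ + ‖H₂·(Ŵ₂* − Ŵ₂)‖. Then e₁ ≤ Cor(t₁,t₂)·(e₂ + Δ) + ‖Y₂ − Y_ds‖. -/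
/- Theorem 3.4: the downstream error of the representation `H₁` trained by task `t₁`
is bounded via the correlation value `Cor(t₁,t₂)`, the downstream error `e₂` of `H₂`,
and the discrepancy term `Δ = ‖Y₂ - Y_ds‖ + ‖H₂·(Ŵ₂* - Ŵ₂)‖`.
All matrix norms are Frobenius norms. -/

attribute [local instance] Matrix.frobeniusNormedAddCommGroup

theorem downstream_error_bound
    (N d m : ℕ) (hN : 0 < N) (hd : 0 < d) (hm : 0 < m)
    (H₁ H₂ : Matrix (Fin N) (Fin d) ℝ)
    (Y₂ Yds : Matrix (Fin N) (Fin m) ℝ)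
    (W₁hat W₂hat W₂star : Matrix (Fin d) (Fin m) ℝ)
    -- Ŵ₁ attains the minimum of ‖H₁·W − Y₂‖ over all heads W
    (hW₁hat : ∀ W : Matrix (Fin d) (Fin m) ℝ, ‖H₁ * W₁hat - Y₂‖ ≤ ‖H₁ * W - Y₂‖)
    -- Ŵ₂ attains the minimum of ‖H₂·W − Y₂‖ over all heads W
    (hW₂hat : ∀ W : Matrix (Fin d) (Fin m) ℝ, ‖H₂ * W₂hat - Y₂‖ ≤ ‖H₂ * W - Y₂‖)
    (hpos : 0 < ‖H₂ * W₂hat - Y₂‖)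
    -- Ŵ₂* attains the minimum of ‖H₂·W − Y_ds‖ over all heads W
    (hW₂star : ∀ W : Matrix (Fin d) (Fin m) ℝ, ‖H₂ * W₂star - Yds‖ ≤ ‖H₂ * W - Yds‖) :
    -- e₁ ≤ Cor(t₁,t₂)·(e₂ + Δ) + ‖Y₂ − Y_ds‖
    (⨅ W : Matrix (Fin d) (Fin m) ℝ, ‖H₁ * W - Yds‖) ≤
      (‖H₁ * W₁hat - Y₂‖ / ‖H₂ * W₂hat - Y₂‖) *
        (‖H₂ * W₂star - Yds‖ + (‖Y₂ - Yds‖ + ‖H₂ * (W₂star - W₂hat)‖)) +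
      ‖Y₂ - Yds‖ := by
  have hinf : (⨅ W : Matrix (Fin d) (Fin m) ℝ, ‖H₁ * W - Yds‖) ≤ ‖H₁ * W₁hat - Yds‖ :=
    ciInf_le ⟨0, fun x hx => by rcases hx with ⟨W, rfl⟩; exact norm_nonneg _⟩ W₁hat
  have h1 : ‖H₁ * W₁hat - Yds‖ ≤ ‖H₁ * W₁hat - Y₂‖ + ‖Y₂ - Yds‖ := by
    calc ‖H₁ * W₁hat - Yds‖ = ‖(H₁ * W₁hat - Y₂) + (Y₂ - Yds)‖ := by congr 1; abel
      _ ≤ ‖H₁ * W₁hat - Y₂‖ + ‖Y₂ - Yds‖ := norm_add_le _ _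
  have h2 : ‖H₂ * W₂hat - Y₂‖ ≤ ‖H₂ * W₂star - Yds‖ + (‖Y₂ - Yds‖ + ‖H₂ * (W₂star - W₂hat)‖) := by
    calc ‖H₂ * W₂hat - Y₂‖
        = ‖(H₂ * W₂star - Yds) + ((Yds - Y₂) - H₂ * (W₂star - W₂hat))‖ := by
          rw [Matrix.mul_sub]; congr 1; abel
      _ ≤ ‖H₂ * W₂star - Yds‖ + ‖(Yds - Y₂) - H₂ * (W₂star - W₂hat)‖ := norm_add_le _ _
      _ ≤ ‖H₂ * W₂star - Yds‖ + (‖Yds - Y₂‖ + ‖H₂ * (W₂star - W₂hat)‖) := by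
          gcongr; exact norm_sub_le _ _
      _ = ‖H₂ * W₂star - Yds‖ + (‖Y₂ - Yds‖ + ‖H₂ * (W₂star - W₂hat)‖) := by
          rw [norm_sub_rev Yds Y₂]
  have hcor : ‖H₁ * W₁hat - Y₂‖ = (‖H₁ * W₁hat - Y₂‖ / ‖H₂ * W₂hat - Y₂‖) * ‖H₂ * W₂hat - Y₂‖ := by
    field_simp
  calc (⨅ W : Matrix (Fin d) (Fin m) ℝ, ‖H₁ * W - Yds‖)
      ≤ ‖H₁ * W₁hat - Yds‖ := hinf
    _ ≤ ‖H₁ * W₁hat - Y₂‖ + ‖Y₂ - Yds‖ := h1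
    _ = (‖H₁ * W₁hat - Y₂‖ / ‖H₂ * W₂hat - Y₂‖) * ‖H₂ * W₂hat - Y₂‖ + ‖Y₂ - Yds‖ := by
        rw [← hcor]
    _ ≤ (‖H₁ * W₁hat - Y₂‖ / ‖H₂ * W₂hat - Y₂‖) *
          (‖H₂ * W₂star - Yds‖ + (‖Y₂ - Yds‖ + ‖H₂ * (W₂star - W₂hat)‖)) + ‖Y₂ - Yds‖ := by
        gcongr
end

section
/- Let N, d, m, k be positive natural numbers with an index set of k tasks t₁,…,t_k, with trained representations H₁,…,H_k ∈ ℝ^{N×d}, self-supervised targets Y₁,…,Y_k ∈ ℝ^{N×m}, and a downstream target Y_ds ∈ ℝ^{N×m}; all norms are Frobenius norms and heads are d×m real matrices. For each i, suppose Ŵᵢ attains the minimum of ‖Hᵢ·W − Yᵢ‖ over all heads W with ‖Hᵢ·Ŵᵢ − Yᵢ‖ > 0, and Ŵᵢ* attains the minimum of ‖Hᵢ·W − Y_ds‖ over all heads W; set eᵢ := ‖Hᵢ·Ŵᵢ* − Y_ds‖. Let H' ∈ ℝ^{N×d} be the representation of a new task t', and for each i suppose Ŵ'ᵢ attains the minimum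 of ‖H'·W − Yᵢ‖ over all heads W; set Cor(t',tᵢ) := ‖H'·Ŵ'ᵢ − Yᵢ‖ / ‖Hᵢ·Ŵᵢ − Yᵢ‖, and set e' := the infimum over all heads W of ‖H'·W − Y_ds‖. Suppose β is a real number with β ≥ ‖Yᵢ − Y_ds‖ + ‖Hᵢ·(Ŵᵢ* − Ŵᵢ)‖ for every i, and δ is a real number with δ ≥ Cor(t',tᵢ) for every i. Then e' ≤ δ·(e_min + β) + β, where e_min := min{e₁, …, e_k}. -/
/- Theorem 3.5: if the new representation `H'` has correlation value at most `δ`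
with each of the `k` base tasks, then its downstream error satisfies
e' ≤ δ·(e_min + β) + β, where e_min = min{e₁,…,e_k}.
All matrix norms are Frobenius norms. -/

attribute [local instance] Matrix.frobeniusNormedAddCommGroup

theorem new_task_downstream_bound
    (N d m k : ℕ) (hN : 0 < N) (hd : 0 < d) (hm : 0 < m) (hk : 0 < k)
    (H : Fin k → Matrix (Fin N) (Fin d) ℝ)
    (Y : Fin k → Matrix (Fin N) (Fin m) ℝ)
    (Yds : Matrix (Fin N) (Fin m) ℝ)
    (What Wstar : Fin k → Matrix (Fin d) (Fin m) ℝ)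
    -- each Ŵᵢ attains the minimum of ‖Hᵢ·W − Yᵢ‖ over all heads W
    (hWhat : ∀ i, ∀ W : Matrix (Fin d) (Fin m) ℝ,
      ‖H i * What i - Y i‖ ≤ ‖H i * W - Y i‖)
    (hpos : ∀ i, 0 < ‖H i * What i - Y i‖)
    -- each Ŵᵢ* attains the minimum of ‖Hᵢ·W − Y_ds‖ over all heads W
    (hWstar : ∀ i, ∀ W : Matrix (Fin d) (Fin m) ℝ,
      ‖H i * Wstar i - Yds‖ ≤ ‖H i * W - Yds‖)
    (H' : Matrix (Fin N) (Fin d) ℝ)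
    (W' : Fin k → Matrix (Fin d) (Fin m) ℝ)
    -- each Ŵ'ᵢ attains the minimum of ‖H'·W − Yᵢ‖ over all heads W
    (hW' : ∀ i, ∀ W : Matrix (Fin d) (Fin m) ℝ,
      ‖H' * W' i - Y i‖ ≤ ‖H' * W - Y i‖)
    (β δ : ℝ)
    (hβ : ∀ i, ‖Y i - Yds‖ + ‖H i * (Wstar i - What i)‖ ≤ β)
    (hδ : ∀ i, ‖H' * W' i - Y i‖ / ‖H i * What i - Y i‖ ≤ δ) :
    (⨅ W : Matrix (Fin d) (Fin m) ℝ, ‖H' * W - Yds‖) ≤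
      δ * ((⨅ i : Fin k, ‖H i * Wstar i - Yds‖) + β) + β := by
  haveI : Nonempty (Fin k) := ⟨⟨0, hk⟩⟩
  obtain ⟨i₀, hi₀⟩ := Finite.exists_min (fun i => ‖H i * Wstar i - Yds‖)
  have hδ0 : 0 ≤ δ :=
    le_trans (div_nonneg (norm_nonneg _) (hpos i₀).le) (hδ i₀)
  -- ‖HŴ − Y‖ ≤ e_{i₀} + β
  have key1 : ‖H i₀ * What i₀ - Y i₀‖ ≤ ‖H i₀ * Wstar i₀ - Yds‖ + β := by
    have heq : H i₀ * What i₀ - Y i₀ =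
        (H i₀ * Wstar i₀ - Yds) - H i₀ * (Wstar i₀ - What i₀) + (Yds - Y i₀) := by
      rw [Matrix.mul_sub]; abel
    calc ‖H i₀ * What i₀ - Y i₀‖
        ≤ ‖(H i₀ * Wstar i₀ - Yds) - H i₀ * (Wstar i₀ - What i₀)‖ + ‖Yds - Y i₀‖ := by
          rw [heq]; exact norm_add_le _ _
      _ ≤ ‖H i₀ * Wstar i₀ - Yds‖ + ‖H i₀ * (Wstar i₀ - What i₀)‖ + ‖Yds - Y i₀‖ := by
          gcongr; exact norm_sub_le _ _
      _ = ‖H i₀ * Wstar i₀ - Yds‖ + (‖Y i₀ - Yds‖ + ‖H i₀ * (Wstar i₀ - What i₀)‖) := by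
          rw [norm_sub_rev (Y i₀)]; ring
      _ ≤ ‖H i₀ * Wstar i₀ - Yds‖ + β := by linarith [hβ i₀]
  have key2 : ‖H' * W' i₀ - Y i₀‖ ≤ δ * ‖H i₀ * What i₀ - Y i₀‖ :=
    (div_le_iff₀ (hpos i₀)).mp (hδ i₀)
  have hmin : ‖H i₀ * Wstar i₀ - Yds‖ ≤ ⨅ i : Fin k, ‖H i * Wstar i - Yds‖ :=
    le_ciInf hi₀
  have hle : (⨅ W : Matrix (Fin d) (Fin m) ℝ, ‖H' * W - Yds‖) ≤ ‖H' * W' i₀ - Yds‖ :=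
    ciInf_le ⟨0, by rintro x ⟨W, rfl⟩; exact norm_nonneg _⟩ (W' i₀)
  calc (⨅ W : Matrix (Fin d) (Fin m) ℝ, ‖H' * W - Yds‖)
      ≤ ‖H' * W' i₀ - Yds‖ := hle
    _ ≤ ‖H' * W' i₀ - Y i₀‖ + ‖Y i₀ - Yds‖ := by
        have := norm_add_le (H' * W' i₀ - Y i₀) (Y i₀ - Yds)
        simpa using this
    _ ≤ δ * (‖H i₀ * Wstar i₀ - Yds‖ + β) + ‖Y i₀ - Yds‖ := by
        have := mul_le_mul_of_nonneg_left key1 hδ0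
        linarith [key2]
    _ ≤ δ * ((⨅ i : Fin k, ‖H i * Wstar i - Yds‖) + β) + β := by
        have h1 := mul_le_mul_of_nonneg_left (add_le_add_right hmin β) hδ0
        have h2 : ‖Y i₀ - Yds‖ ≤ β := by
          have := hβ i₀; have := norm_nonneg (H i₀ * (Wstar i₀ - What i₀)); linarith
        linarith
end

section
/- Let N, d, m be positive natural numbers, Hᵢ and H' be N×d real matrices, Yᵢ and Y_ds be N×m real matrices; all norms are Frobenius norms. Suppose Ŵᵢ attains the minimum of ‖Hᵢ·W − Yᵢ‖ over all d×m real matrices W with ‖Hᵢ·Ŵᵢ − Yᵢ‖ > 0; Ŵᵢ* attains the minimum of ‖Hᵢ·W − Y_ds‖ over all d×m real matrices W, with eᵢ := ‖Hᵢ·Ŵᵢ* − Y_ds‖; and Ŵ'ᵢ attains the minimum of ‖H'·W − Yᵢ‖ over all d×m real matrices W, with Cor(t',tᵢ) := ‖H'·Ŵ'ᵢ − Yᵢ‖ / ‖Hᵢ·Ŵᵢ − Yᵢ‖. If β is a real number with β ≥ ‖Yᵢ − Y_ds‖ + ‖Hᵢ·(Ŵᵢ* − Ŵᵢ)‖, and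 e' := the infimum over all d×m real matrices W of ‖H'·W − Y_ds‖, then e' ≤ Cor(t',tᵢ)·(eᵢ + β) + β. -/
/- Per-task inequality (Formula 29) in the proof of Theorem 3.5:
the downstream error of the new representation `H'` satisfies
e' ≤ Cor(t',tᵢ)·(eᵢ + β) + β. All matrix norms are Frobenius norms. -/

attribute [local instance] Matrix.frobeniusNormedAddCommGroup

theorem per_task_downstream_bound
    (N d m : ℕ) (hN : 0 < N) (hd : 0 < d) (hm : 0 < m)
    (Hi H' : Matrix (Fin N) (Fin d) ℝ)
    (Yi Yds : Matrix (Fin N) (Fin m) ℝ)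
    (Wihat Wistar W'i : Matrix (Fin d) (Fin m) ℝ)
    -- Ŵᵢ attains the minimum of ‖Hᵢ·W − Yᵢ‖ over all heads W
    (hWihat : ∀ W : Matrix (Fin d) (Fin m) ℝ, ‖Hi * Wihat - Yi‖ ≤ ‖Hi * W - Yi‖)
    (hpos : 0 < ‖Hi * Wihat - Yi‖)
    -- Ŵᵢ* attains the minimum of ‖Hᵢ·W − Y_ds‖ over all heads W
    (hWistar : ∀ W : Matrix (Fin d) (Fin m) ℝ, ‖Hi * Wistar - Yds‖ ≤ ‖Hi * W - Yds‖)
    -- Ŵ'ᵢ attains the minimum of ‖H'·W − Yᵢ‖ over all heads W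
    (hW'i : ∀ W : Matrix (Fin d) (Fin m) ℝ, ‖H' * W'i - Yi‖ ≤ ‖H' * W - Yi‖)
    (β : ℝ)
    (hβ : ‖Yi - Yds‖ + ‖Hi * (Wistar - Wihat)‖ ≤ β) :
    (⨅ W : Matrix (Fin d) (Fin m) ℝ, ‖H' * W - Yds‖) ≤
      (‖H' * W'i - Yi‖ / ‖Hi * Wihat - Yi‖) * (‖Hi * Wistar - Yds‖ + β) + β := by
  have hβ1 : ‖Yi - Yds‖ ≤ β := le_trans (le_add_of_nonneg_right (norm_nonneg _)) hβ
  have h1 : (⨅ W : Matrix (Fin d) (Fin m) ℝ, ‖H' * W - Yds‖) ≤ ‖H' * W'i - Yds‖ :=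
    ciInf_le ⟨0, fun x hx => by rcases hx with ⟨W, rfl⟩; exact norm_nonneg _⟩ W'i
  have h2 : ‖H' * W'i - Yds‖ ≤ ‖H' * W'i - Yi‖ + ‖Yi - Yds‖ := by
    calc ‖H' * W'i - Yds‖ = ‖(H' * W'i - Yi) + (Yi - Yds)‖ := by congr 1; abel
      _ ≤ ‖H' * W'i - Yi‖ + ‖Yi - Yds‖ := norm_add_le _ _
  have h3 : ‖Hi * Wihat - Yi‖ ≤ ‖Hi * Wistar - Yds‖ + β := by
    calc ‖Hi * Wihat - Yi‖ ≤ ‖Hi * Wistar - Yi‖ := hWihat Wistar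
      _ = ‖(Hi * Wistar - Yds) - (Yi - Yds)‖ := by congr 1; abel
      _ ≤ ‖Hi * Wistar - Yds‖ + ‖Yi - Yds‖ := norm_sub_le _ _
      _ ≤ ‖Hi * Wistar - Yds‖ + β := by linarith
  have key : ‖H' * W'i - Yi‖ =
      (‖H' * W'i - Yi‖ / ‖Hi * Wihat - Yi‖) * ‖Hi * Wihat - Yi‖ :=
    (div_mul_cancel₀ _ (ne_of_gt hpos)).symm
  have hcor : 0 ≤ ‖H' * W'i - Yi‖ / ‖Hi * Wihat - Yi‖ :=
    div_nonneg (norm_nonneg _) (le_of_lt hpos)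
  calc (⨅ W : Matrix (Fin d) (Fin m) ℝ, ‖H' * W - Yds‖)
      ≤ ‖H' * W'i - Yi‖ + ‖Yi - Yds‖ := le_trans h1 h2
    _ ≤ (‖H' * W'i - Yi‖ / ‖Hi * Wihat - Yi‖) * ‖Hi * Wihat - Yi‖ + β := by
        rw [← key]; linarith
    _ ≤ (‖H' * W'i - Yi‖ / ‖Hi * Wihat - Yi‖) * (‖Hi * Wistar - Yds‖ + β) + β := by
        have := mul_le_mul_of_nonneg_left h3 hcor; linarith
end
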